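/- arXiv:1002.1543 — 3 statements merged into one kernel-verified Lean document; each statement's English description precedes it below -/
import Mathlib

section
/- Let u₁ < u₂ < v₁ < v₂ be real numbers, so the intervals (u₁,v₁) and (u₂,v₂) are linked while (u₂,v₁) and (u₁,v₂) are nested. Then for any real interval (x,y) with x < y, the number of intervals among {(u₁,v₁), (u₂,v₂)} that are linked with (x,y) is at least the number of intervals among {(u₂,v₁), (u₁,v₂)} that are linked with (x,y). -/
open scoped Classical

def Linked (a b c d : ℝ) : Prop :=
  (a < c ∧ c < b ∧ b < d) ∨ (c < a ∧ a < d ∧ d < b)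

set_option maxHeartbeats 4000000 in
theorem linked_count_resolution (u₁ u₂ v₁ v₂ x y : ℝ)
    (h12 : u₁ < u₂) (h2v : u₂ < v₁) (hv : v₁ < v₂) (hxy : x < y) :
    (if Linked u₂ v₁ x y then 1 else 0) + (if Linked u₁ v₂ x y then 1 else 0) ≤
    (if Linked u₁ v₁ x y then 1 else 0) + (if Linked u₂ v₂ x y then (1:ℕ) else 0) := by
  unfold Linked
  split_ifs
  all_goals try norm_num
  all_goals exfalso
  all_goals simp only [not_or, not_and_or, not_lt] at *
  all_goals casesm* _ ∨ _, _ ∧ _ <;> linarith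
end

section
/- Fix real numbers u₁ < u₂ < v₁ < v₂ and define F(x,y) to be the number of intervals among {(u₁,v₁), (u₂,v₂)} that are linked with the interval (x,y). Then for any reals x₁ < x₂ < y₁ < y₂, one has F(x₁,y₁) + F(x₂,y₂) ≥ F(x₂,y₁) + F(x₁,y₂). -/
open scoped Classical

lemma linked_A {u v x₁ x₂ y₁ y₂ : ℝ} (hx : x₁ < x₂) (hxy : x₂ < y₁) (hy : y₁ < y₂)
    (h1 : Linked u v x₂ y₁) (h2 : Linked u v x₁ y₂) :
    Linked u v x₁ y₁ ∧ Linked u v x₂ y₂ := by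
  rcases h1 with ⟨a1,a2,a3⟩|⟨a1,a2,a3⟩ <;> rcases h2 with ⟨b1,b2,b3⟩|⟨b1,b2,b3⟩
  · exact ⟨Or.inl ⟨b1,b2,a3⟩, Or.inl ⟨a1,a2,b3⟩⟩
  · exact absurd (a3.trans hy) (not_lt.2 b3.le)
  · exact absurd (hx.trans a1) (not_lt.2 b1.le)
  · exact ⟨Or.inr ⟨b1,a2,a3⟩, Or.inr ⟨a1,b2,b3⟩⟩

lemma linked_B {u v x₁ x₂ y₁ y₂ : ℝ} (hx : x₁ < x₂) (hxy : x₂ < y₁) (hy : y₁ < y₂)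
    (h1 : Linked u v x₂ y₁) : Linked u v x₁ y₁ ∨ Linked u v x₂ y₂ := by
  rcases h1 with ⟨a1,a2,a3⟩|⟨a1,a2,a3⟩
  · exact Or.inr (Or.inl ⟨a1,a2,a3.trans hy⟩)
  · exact Or.inl (Or.inr ⟨hx.trans a1,a2,a3⟩)

lemma linked_C {u v x₁ x₂ y₁ y₂ : ℝ} (hx : x₁ < x₂) (hxy : x₂ < y₁) (hy : y₁ < y₂)
    (h2 : Linked u v x₁ y₂) : Linked u v x₁ y₁ ∨ Linked u v x₂ y₂ := by
  rcases h2 with ⟨a1,a2,a3⟩|⟨a1,a2,a3⟩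
  · rcases lt_or_ge v y₁ with h | h
    · exact Or.inl (Or.inl ⟨a1,a2,h⟩)
    · exact Or.inr (Or.inl ⟨a1.trans hx, hxy.trans_le h, a3⟩)
  · rcases lt_or_ge u y₁ with h | h
    · exact Or.inl (Or.inr ⟨a1,h,hy.trans a3⟩)
    · exact Or.inr (Or.inr ⟨hxy.trans_le h, a2, a3⟩)

lemma key (u v x₁ x₂ y₁ y₂ : ℝ) (hx : x₁ < x₂) (hxy : x₂ < y₁) (hy : y₁ < y₂) :
    (if Linked u v x₂ y₁ then 1 else 0) + (if Linked u v x₁ y₂ then 1 else 0) ≤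
    (if Linked u v x₁ y₁ then (1:ℕ) else 0) + (if Linked u v x₂ y₂ then 1 else 0) := by
  by_cases h1 : Linked u v x₂ y₁ <;> by_cases h2 : Linked u v x₁ y₂
  · obtain ⟨k1, k2⟩ := linked_A hx hxy hy h1 h2
    simp [h1, h2, k1, k2]
  · rcases linked_B hx hxy hy h1 with k | k <;> simp [h1, h2, k]
  · rcases linked_C hx hxy hy h2 with k | k <;> simp [h1, h2, k]
  · simp [h1, h2]

theorem F_superadditive (u₁ u₂ v₁ v₂ : ℝ)
    (h12 : u₁ < u₂) (h2v : u₂ < v₁) (hv : v₁ < v₂)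
    (F : ℝ → ℝ → ℕ)
    (hF : ∀ x y : ℝ, F x y =
      (if Linked u₁ v₁ x y then 1 else 0) + (if Linked u₂ v₂ x y then 1 else 0))
    (x₁ x₂ y₁ y₂ : ℝ) (hx : x₁ < x₂) (hxy : x₂ < y₁) (hy : y₁ < y₂) :
    F x₂ y₁ + F x₁ y₂ ≤ F x₁ y₁ + F x₂ y₂ := by
  simp only [hF]
  have k1 := key u₁ v₁ x₁ x₂ y₁ y₂ hx hxy hy
  have k2 := key u₂ v₂ x₁ x₂ y₁ y₂ hx hxy hy
  omega
end

section
/- Let n ≥ 2 and let I : Fin n → ℝ × ℝ be a family of intervals with (I k).1 < (I k).2 for all k, such that I 0 = (u₁, v₁) and I 1 = (u₂, v₂) with u₁ < u₂ < v₁ < v₂ (so I 0 and I 1 are linked). Let I' agree with I except I' 0 = (u₂, v₁) and I' 1 = (u₁, v₂). Then the number of unordered pairs {j,k} with I' j linked with I' k is strictly less than the number of unordered pairs {j,k} with I j linked with I k. -/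
open scoped Classical

/-- Two intervals, given as pairs, are linked. -/
def LinkedP (P Q : ℝ × ℝ) : Prop := Linked P.1 P.2 Q.1 Q.2

section key
variable {u₁ u₂ v₁ v₂ a b : ℝ}

lemma linked_keyA (h12 : u₁ < u₂) (h2v : u₂ < v₁) (hv : v₁ < v₂)
    (h1 : Linked u₂ v₁ a b) (h2 : Linked u₁ v₂ a b) :
    Linked u₁ v₁ a b ∧ Linked u₂ v₂ a b := by
  unfold Linked at *
  rcases h1 with ⟨p1, p2, p3⟩ | ⟨p1, p2, p3⟩ <;>
    rcases h2 with ⟨q1, q2, q3⟩ | ⟨q1, q2, q3⟩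
  · exact ⟨Or.inl ⟨q1, p2, p3⟩, Or.inl ⟨p1, q2, q3⟩⟩
  · exfalso; linarith
  · exfalso; linarith
  · exact ⟨Or.inr ⟨q1, q2, p3⟩, Or.inr ⟨p1, p2, q3⟩⟩

lemma linked_keyB (h12 : u₁ < u₂) (h2v : u₂ < v₁) (hv : v₁ < v₂)
    (h1 : Linked u₂ v₁ a b) :
    Linked u₁ v₁ a b ∨ Linked u₂ v₂ a b := by
  unfold Linked at *
  rcases h1 with ⟨p1, p2, p3⟩ | ⟨p1, p2, p3⟩
  · exact Or.inl (Or.inl ⟨by linarith, p2, p3⟩)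
  · exact Or.inr (Or.inr ⟨p1, p2, by linarith⟩)

lemma linked_keyC (h12 : u₁ < u₂) (h2v : u₂ < v₁) (hv : v₁ < v₂)
    (h2 : Linked u₁ v₂ a b) :
    Linked u₁ v₁ a b ∨ Linked u₂ v₂ a b := by
  unfold Linked at *
  rcases h2 with ⟨q1, q2, q3⟩ | ⟨q1, q2, q3⟩
  · rcases lt_or_ge a v₁ with h | h
    · exact Or.inl (Or.inl ⟨q1, h, by linarith⟩)
    · exact Or.inr (Or.inl ⟨by linarith, q2, q3⟩)
  · rcases lt_or_ge u₂ b with h | h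
    · exact Or.inr (Or.inr ⟨by linarith, h, q3⟩)
    · exact Or.inl (Or.inr ⟨q1, q2, by linarith⟩)

lemma linked_key (h12 : u₁ < u₂) (h2v : u₂ < v₁) (hv : v₁ < v₂) :
    ((if Linked u₂ v₁ a b then 1 else 0) + (if Linked u₁ v₂ a b then 1 else 0) : ℕ) ≤
    (if Linked u₁ v₁ a b then 1 else 0) + (if Linked u₂ v₂ a b then 1 else 0) := by
  by_cases h1 : Linked u₂ v₁ a b <;> by_cases h2 : Linked u₁ v₂ a b
  · obtain ⟨h3, h4⟩ := linked_keyA h12 h2v hv h1 h2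
    simp [h1, h2, h3, h4]
  · rcases linked_keyB h12 h2v hv h1 with h3 | h3 <;> simp [h1, h2, h3] <;> omega
  · rcases linked_keyC h12 h2v hv h2 with h3 | h3 <;> simp [h1, h2, h3] <;> omega
  · simp [h1, h2]

end key

theorem scr_decreases (n : ℕ) (u₁ u₂ v₁ v₂ : ℝ)
    (h12 : u₁ < u₂) (h2v : u₂ < v₁) (hv : v₁ < v₂)
    (I I' : Fin (n + 2) → ℝ × ℝ)
    (hI : ∀ k, (I k).1 < (I k).2)
    (hI0 : I 0 = (u₁, v₁)) (hI1 : I 1 = (u₂, v₂))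
    (hI'0 : I' 0 = (u₂, v₁)) (hI'1 : I' 1 = (u₁, v₂))
    (hI' : ∀ k, k ≠ 0 → k ≠ 1 → I' k = I k) :
    (Finset.univ.filter
        (fun jk : Fin (n + 2) × Fin (n + 2) =>
          jk.1 < jk.2 ∧ LinkedP (I' jk.1) (I' jk.2))).card <
    (Finset.univ.filter
        (fun jk : Fin (n + 2) × Fin (n + 2) =>
          jk.1 < jk.2 ∧ LinkedP (I jk.1) (I jk.2))).card := by
  classical
  have hcard : ∀ J : Fin (n + 2) → ℝ × ℝ,
      (Finset.univ.filter
        (fun jk : Fin (n + 2) × Fin (n + 2) =>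
          jk.1 < jk.2 ∧ LinkedP (J jk.1) (J jk.2))).card =
      ∑ j : Fin (n + 2), ∑ k : Fin (n + 2),
        (if j < k ∧ LinkedP (J j) (J k) then 1 else 0) := by
    intro J
    rw [Finset.card_filter, Fintype.sum_prod_type]
  rw [hcard, hcard]
  -- split off j = 0 and j = 1
  have hsplit : ∀ g : Fin (n + 2) → ℕ,
      ∑ j : Fin (n + 2), g j = g 0 + g 1 + ∑ i : Fin n, g i.succ.succ := by
    intro g
    rw [Fin.sum_univ_succ, Fin.sum_univ_succ, Fin.succ_zero_eq_one]
    omega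
  have e1 := hsplit (fun j => ∑ k : Fin (n + 2), if j < k ∧ LinkedP (I' j) (I' k) then 1 else 0)
  have e2 := hsplit (fun j => ∑ k : Fin (n + 2), if j < k ∧ LinkedP (I j) (I k) then 1 else 0)
  rw [e1, e2]
  -- tail sums are equal
  have htail : ∀ i : Fin n,
      (∑ k : Fin (n + 2), (if i.succ.succ < k ∧ LinkedP (I' i.succ.succ) (I' k) then 1 else 0)) =
      ∑ k : Fin (n + 2), (if i.succ.succ < k ∧ LinkedP (I i.succ.succ) (I k) then 1 else 0) := by
    intro i
    apply Finset.sum_congr rfl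
    intro k _
    by_cases hjk : i.succ.succ < k
    · have hj0 : (i.succ.succ : Fin (n + 2)) ≠ 0 := Fin.succ_ne_zero _
      have hj1 : (i.succ.succ : Fin (n + 2)) ≠ 1 := by
        intro h
        have := congrArg Fin.val h
        simp [Fin.val_succ, Fin.val_one] at this
      have hk0 : k ≠ 0 := by
        intro h; subst h
        exact absurd hjk (by simp [Fin.lt_def])
      have hk1 : k ≠ 1 := by
        intro h; subst h
        have h2 : (i.succ.succ : Fin (n + 2)).val < (1 : Fin (n + 2)).val := hjk
        simp [Fin.val_succ, Fin.val_one] at h2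
      rw [hI' _ hj0 hj1, hI' _ hk0 hk1]
    · simp [hjk]
  have Tsum : (∑ i : Fin n, ∑ k : Fin (n + 2),
      (if i.succ.succ < k ∧ LinkedP (I' i.succ.succ) (I' k) then 1 else 0)) =
      ∑ i : Fin n, ∑ k : Fin (n + 2),
      (if i.succ.succ < k ∧ LinkedP (I i.succ.succ) (I k) then 1 else 0) :=
    Finset.sum_congr rfl fun i _ => htail i
  rw [Tsum]
  have hhead : (∑ k : Fin (n + 2), (if (0 : Fin (n + 2)) < k ∧ LinkedP (I' 0) (I' k) then 1 else 0)) +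
      (∑ k : Fin (n + 2), (if (1 : Fin (n + 2)) < k ∧ LinkedP (I' 1) (I' k) then 1 else 0)) <
      (∑ k : Fin (n + 2), (if (0 : Fin (n + 2)) < k ∧ LinkedP (I 0) (I k) then 1 else 0)) +
      (∑ k : Fin (n + 2), (if (1 : Fin (n + 2)) < k ∧ LinkedP (I 1) (I k) then 1 else 0)) := by
    rw [← Finset.sum_add_distrib, ← Finset.sum_add_distrib]
    apply Finset.sum_lt_sum
    · intro k _
      by_cases hk0 : k = 0
      · subst hk0
        simp
      by_cases hk1 : k = 1
      · subst hk1
        have h01 : (0 : Fin (n + 2)) < 1 := by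
          rw [Fin.lt_def]; norm_num
        have hnl : ¬ LinkedP (I' 0) (I' 1) := by
          rw [hI'0, hI'1]
          rintro (⟨a1, a2, a3⟩ | ⟨a1, a2, a3⟩) <;> simp_all <;> linarith
        have hl : LinkedP (I 0) (I 1) := by
          rw [hI0, hI1]
          exact Or.inl ⟨h12, h2v, hv⟩
        simp [hnl, hl, h01]
      · have h0k : (0 : Fin (n + 2)) < k := by
          rw [Fin.lt_def]
          have := Fin.val_ne_of_ne hk0
          simp at this ⊢
          exact Fin.pos_iff_ne_zero.mpr hk0
        have h1k : (1 : Fin (n + 2)) < k := by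
          rw [Fin.lt_def]
          have h0 := Fin.val_ne_of_ne hk0
          have h1 := Fin.val_ne_of_ne hk1
          have hv1 : (1 : Fin (n + 2)).val = 1 := rfl
          have hv0 : (0 : Fin (n + 2)).val = 0 := rfl
          rw [hv1]
          omega
        rw [hI'0, hI'1, hI0, hI1, hI' k hk0 hk1]
        simp only [h0k, h1k, true_and]
        exact linked_key h12 h2v hv
    · refine ⟨1, Finset.mem_univ _, ?_⟩
      have h01 : (0 : Fin (n + 2)) < 1 := by
        rw [Fin.lt_def]; norm_num
      have hnl : ¬ LinkedP (I' 0) (I' 1) := by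
        rw [hI'0, hI'1]
        rintro (⟨a1, a2, a3⟩ | ⟨a1, a2, a3⟩) <;> simp_all <;> linarith
      have hl : LinkedP (I 0) (I 1) := by
        rw [hI0, hI1]
        exact Or.inl ⟨h12, h2v, hv⟩
      simp [hnl, hl, h01]
  omega
end
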